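/- arXiv:1311.5780 — 4 statements merged into one kernel-verified Lean document; each statement's English description precedes it below -/
import Mathlib

section
/- Let N ≥ 1 and let λ_1 > λ_2 > ... be given by real numbers l_i = λ_i - i for a strictly decreasing integer sequence. Then the sum over i = 1,...,N of the products over j ≠ i of ((l_i - l_j - 1)/(l_i - l_j)) equals N. Equivalently, for any strictly decreasing integers l_1 > l_2 > ... > l_N, ∑_{i=1}^N ∏_{j≠i} (l_i - l_j - 1)/(l_i - l_j) = N. -/
open Polynomial Finset Lagrange

/-!
With nodes `v i` and `c ≠ 0`, the polynomial `P = ∏ (X - v j) - ∏ (X - v j - c)` has degree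
`< N` and `X^(N-1)`-coefficient `N c`, while `P (v i) = c ∏_{j ≠ i} (v i - v j - c)`. Lagrange
interpolation at the nodes expresses that coefficient as `∑ i, P (v i) / ∏_{j ≠ i} (v i - v j)`,
which is `c` times the sum in question.
-/

section

variable {R : Type*} [CommRing R] {ι : Type*} (s : Finset ι)

theorem degree_nodal_sub_nodal_lt [Nontrivial R] (v w : ι → R) :
    (nodal s v - nodal s w).degree < #s := by
  rw [← degree_nodal (v := v)]
  exact degree_sub_lt_left (by rw [degree_nodal, degree_nodal]) nodal_ne_zero
    (by rw [nodal_monic.leadingCoeff, nodal_monic.leadingCoeff])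

theorem coeff_nodal_sub_nodal_add (hs : s.Nonempty) (v : ι → R) (c : R) :
    (nodal s v - nodal s (v · + c)).coeff (#s - 1) = #s * c := by
  rw [coeff_sub, nodal_eq, nodal_eq, prod_X_sub_C_coeff_card_pred s _ hs.card_pos,
    prod_X_sub_C_coeff_card_pred s _ hs.card_pos, sum_add_distrib, sum_const, nsmul_eq_mul]
  ring

theorem eval_nodal_sub_nodal_add [DecidableEq ι] {i : ι} (hi : i ∈ s) (v : ι → R) (c : R) :
    (nodal s v - nodal s (v · + c)).eval (v i) = c * ∏ j ∈ s.erase i, (v i - v j - c) := by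
  rw [eval_sub, eval_nodal_at_node hi, eval_nodal, ← mul_prod_erase s _ hi]
  simp only [sub_add_eq_sub_sub, sub_self, zero_sub, neg_mul, neg_neg]

end

theorem sum_prod_sub_sub_div_sub_eq_card {F : Type*} [Field F] {ι : Type*} [DecidableEq ι]
    {s : Finset ι} {v : ι → F} (hv : Set.InjOn v s) {c : F} (hc : c ≠ 0) :
    ∑ i ∈ s, ∏ j ∈ s.erase i, (v i - v j - c) / (v i - v j) = #s := by
  obtain rfl | hs := s.eq_empty_or_nonempty
  · simp
  have hcoeff := coeff_eq_sum hv (degree_nodal_sub_nodal_lt s v (v · + c))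
  rw [coeff_nodal_sub_nodal_add s hs] at hcoeff
  refine mul_right_cancel₀ hc ?_
  rw [hcoeff, sum_mul]
  refine sum_congr rfl fun i hi => ?_
  rw [eval_nodal_sub_nodal_add s hi, prod_div_distrib]
  ring

theorem stmt_0_general (N : ℕ) (l : Fin N → ℤ) (hl : StrictAnti l) :
    ∑ i : Fin N, ∏ j ∈ Finset.univ.erase i,
      (((l i - l j - 1 : ℤ) : ℚ) / ((l i - l j : ℤ) : ℚ)) = N := by
  have hinj : Set.InjOn (fun i => (l i : ℚ)) (univ : Finset (Fin N)) :=
    fun a _ b _ hab => hl.injective (Int.cast_injective hab)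
  push_cast
  simpa using sum_prod_sub_sub_div_sub_eq_card hinj one_ne_zero

/-- For strictly decreasing integers `l 1 > l 2 > ... > l N`,
`∑_{i=1}^N ∏_{j≠i} (l i - l j - 1)/(l i - l j) = N`. -/
theorem stmt_0 (N : ℕ) (hN : 1 ≤ N) (l : Fin N → ℤ) (hl : StrictAnti l) :
    ∑ i : Fin N, ∏ j ∈ Finset.univ.erase i,
      (((l i - l j - 1 : ℤ) : ℚ) / ((l i - l j : ℤ) : ℚ)) = N :=
  stmt_0_general N l hl
end

section
/- Let V(x_1,...,x_N) = ∏_{i<j}(x_i - x_j) be the Vandermonde polynomial in N variables, and for each i let T_i denote the operator substituting x_i - 1 for x_i. Then ∑_{i=1}^N T_i(V) = N · V as polynomials. -/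
/-!
For pairwise distinct values `x`, only the factors of `V` that contain `x i` change under `T i`, so
`T i V (x) / V (x) = ∏_{j ≠ i} (x i - 1 - x j) / (x i - x j)`. Summed over `i`, this is Lagrange's
formula for the coefficient of `t ^ (N - 1)` in `∏_j (t - x j) - ∏_j (t - x j - 1)`: that polynomial
has degree `< N`, takes the value `∏_{j ≠ i} (x i - 1 - x j)` at `x i`, and its coefficient of
`t ^ (N - 1)` is `N`. After multiplication by `V` the two sides of the identity then agree at every
point of `ℚ ^ N`, as `V` vanishes wherever two coordinates coincide.
-/

open MvPolynomial

open Finset Function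

namespace Lagrange

open Polynomial

theorem sum_prod_sub_one_sub_div_prod_sub {ι F : Type*} [Field F] [DecidableEq ι]
    {s : Finset ι} {v : ι → F} (hvs : Set.InjOn v s) :
    ∑ i ∈ s, (∏ j ∈ s.erase i, (v i - 1 - v j)) / ∏ j ∈ s.erase i, (v i - v j) = #s := by
  rcases s.eq_empty_or_nonempty with rfl | hs
  · simp
  set P := nodal s v - nodal s (v · + 1)
  have hdeg : P.degree < #s := by
    rw [← degree_nodal (s := s) (v := v)]
    refine degree_sub_lt_left (by simp [degree_nodal]) nodal_ne_zero ?_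
    rw [nodal_monic.leadingCoeff, nodal_monic.leadingCoeff]
  have heval : ∀ i ∈ s, P.eval (v i) = ∏ j ∈ s.erase i, (v i - 1 - v j) := by
    intro i hi
    rw [Polynomial.eval_sub, eval_nodal_at_node hi, eval_nodal,
      ← mul_prod_erase s _ hi]
    simp only [zero_sub, sub_add_cancel_left, neg_mul, one_mul, neg_neg]
    exact prod_congr rfl fun j _ => by ring
  have hcoeff : P.coeff (#s - 1) = #s := by
    simp only [P, Polynomial.coeff_sub, nodal_eq,
      prod_X_sub_C_coeff_card_pred s _ hs.card_pos, sum_add_distrib, sum_const, nsmul_one]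
    ring
  rw [← hcoeff, coeff_eq_sum hvs hdeg]
  exact sum_congr rfl fun i hi => by rw [heval i hi]

end Lagrange

section Vandermonde

variable {ι : Type*} [LinearOrder ι] [Fintype ι]

theorem Finset.prod_filter_lt_eq_mul_prod_erase {M : Type*} [CommMonoid M] (f : ι × ι → M)
    (i : ι) :
    ∏ p ∈ univ.filter (fun p : ι × ι => p.1 < p.2), f p =
      (∏ p ∈ univ.filter (fun p : ι × ι => p.1 < p.2 ∧ p.1 ≠ i ∧ p.2 ≠ i), f p) *
        ∏ j ∈ univ.erase i, f (min i j, max i j) := by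
  rw [← prod_filter_mul_prod_filter_not _ (fun p : ι × ι => p.1 ≠ i ∧ p.2 ≠ i), filter_filter]
  congr 1
  refine prod_nbij' (fun p => if p.1 = i then p.2 else p.1) (fun j => (min i j, max i j))
    ?_ ?_ ?_ ?_ ?_ <;> intro p <;> grind

def vandermondeProd {R : Type*} [CommRing R] (x : ι → R) : R :=
  ∏ p ∈ univ.filter (fun p : ι × ι => p.1 < p.2), (x p.1 - x p.2)

theorem map_vandermondeProd {R S F : Type*} [CommRing R] [CommRing S] [FunLike F R S]
    [RingHomClass F R S] (f : F) (x : ι → R) :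
    f (vandermondeProd x) = vandermondeProd fun i => f (x i) := by
  simp [vandermondeProd, map_prod, map_sub]

theorem vandermondeProd_ne_zero_iff {R : Type*} [CommRing R] [IsDomain R] {x : ι → R} :
    vandermondeProd x ≠ 0 ↔ Injective x := by
  simp only [vandermondeProd, prod_ne_zero_iff, mem_filter, mem_univ, true_and, Prod.forall,
    sub_ne_zero]
  exact ⟨fun h => (injective_iff_pairwise_ne).2 fun a b hab => (hab.lt_or_gt).elim (h a b)
    fun hba => (h b a hba).symm, fun hx a b hab => hx.ne hab.ne⟩

theorem vandermondeProd_update_sub_one_mul {R : Type*} [CommRing R]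
    (x : ι → R) (i : ι) :
    vandermondeProd (update x i (x i - 1)) * ∏ j ∈ univ.erase i, (x i - x j) =
      (∏ j ∈ univ.erase i, (x i - 1 - x j)) * vandermondeProd x := by
  have off_i : ∀ p ∈ univ.filter (fun p : ι × ι => p.1 < p.2 ∧ p.1 ≠ i ∧ p.2 ≠ i),
      update x i (x i - 1) p.1 - update x i (x i - 1) p.2 = x p.1 - x p.2 := by
    intro p hp
    simp only [mem_filter] at hp
    rw [update_of_ne hp.2.2.1, update_of_ne hp.2.2.2]
  have at_i : ∀ j ∈ univ.erase i,
      (update x i (x i - 1) (min i j) - update x i (x i - 1) (max i j)) * (x i - x j) =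
        (x i - 1 - x j) * (x (min i j) - x (max i j)) := by
    intro j hj
    rcases (ne_of_mem_erase hj).lt_or_gt with hji | hij
    · rw [min_eq_right hji.le, max_eq_left hji.le, update_of_ne hji.ne, update_self]
      ring
    · simp [min_eq_left hij.le, max_eq_right hij.le, hij.ne']
  rw [vandermondeProd, vandermondeProd, prod_filter_lt_eq_mul_prod_erase _ i,
    prod_filter_lt_eq_mul_prod_erase _ i, prod_congr rfl off_i, mul_assoc, ← prod_mul_distrib,
    prod_congr rfl at_i, prod_mul_distrib]
  ring

theorem sum_vandermondeProd_update_sub_one {K : Type*} [Field K] {x : ι → K}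
    (hx : Injective x) :
    ∑ i, vandermondeProd (update x i (x i - 1)) = Fintype.card ι * vandermondeProd x := by
  have hD : ∀ i, ∏ j ∈ univ.erase i, (x i - x j) ≠ 0 := fun i =>
    prod_ne_zero_iff.2 fun j hj => sub_ne_zero.2 (hx.ne (ne_of_mem_erase hj).symm)
  have hterm : ∀ i, vandermondeProd (update x i (x i - 1)) =
      (∏ j ∈ univ.erase i, (x i - 1 - x j)) / (∏ j ∈ univ.erase i, (x i - x j)) *
        vandermondeProd x := fun i => by
    rw [div_mul_eq_mul_div, eq_div_iff (hD i), vandermondeProd_update_sub_one_mul]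
  rw [sum_congr rfl fun i _ => hterm i, ← sum_mul,
    Lagrange.sum_prod_sub_one_sub_div_prod_sub hx.injOn, card_univ]

end Vandermonde

/-- With `V` the Vandermonde polynomial `∏_{i<j} (x i - x j)` and `T i` the substitution
`x i ↦ x i - 1`, one has `∑ i, T i (V) = N • V`. -/
theorem stmt_1 (N : ℕ) (V : MvPolynomial (Fin N) ℚ)
    (hV : V = ∏ p ∈ Finset.univ.filter (fun p : Fin N × Fin N => p.1 < p.2),
      (X p.1 - X p.2)) :
    ∑ i : Fin N, aeval (fun j : Fin N => if j = i then X j - 1 else X j) V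
      = (N : MvPolynomial (Fin N) ℚ) * V := by
  change V = vandermondeProd X at hV
  subst hV
  have hshift : ∀ (x : Fin N → ℚ) (i : Fin N),
      (fun j => eval x (if j = i then X j - 1 else X j)) = update x i (x i - 1) := by
    intro x i
    funext j
    rw [update_apply]
    split_ifs with h <;> simp [h]
  refine mul_right_cancel₀ (vandermondeProd_ne_zero_iff.2 X_injective)
    (MvPolynomial.funext fun x => ?_)
  simp only [map_mul, map_sum, map_vandermondeProd, aeval_X, eval_X, map_natCast, hshift]
  by_cases hx : Injective x
  · rw [sum_vandermondeProd_update_sub_one hx, Fintype.card_fin]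
  · rw [not_ne_iff.1 (mt vandermondeProd_ne_zero_iff.1 hx), mul_zero, mul_zero]
end

section
/- Let f(z_1,...,z_n) be analytic in a neighborhood of (1,...,1), let P be a set of pairs (a,b) with 1 ≤ a < b ≤ n, and define f_P = (1/n!) ∑_{σ ∈ S_n} f(z_{σ(1)},...,z_{σ(n)}) / ∏_{(a,b)∈P} (z_{σ(a)} - z_{σ(b)}). Then f_P extends to an analytic function in a (possibly smaller) neighborhood of (1,...,1). -/
/-!
Multiplying `n! • f_P` by the Vandermonde product `V z = ∏_{a<b} (z a - z b)` gives the
antisymmetrization `H` of the analytic function `z ↦ f z * ∏_{(a,b) ∉ P, a<b} (z a - z b)`.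
`H` is analytic and alternating, so it vanishes on every diagonal `z a = z b`.

An analytic function `H = ∑ p_k` vanishing on a hyperplane `ℓ = 0` through `c` is `ℓ` times an
analytic function: if `π` projects onto the hyperplane along `e`, so that `w - π w = ℓ w • e`,
then `H (c + w) = ∑ (p_k(w,…,w) - p_k(π w,…,π w))`, and each difference telescopes, slot by
slot, into `ℓ w • q_{k-1}(w,…,w)`, where the `q_k` still have a positive radius of convergence.
The quotient vanishes on the other diagonals off `ℓ = 0`, hence on them by continuity, so the
factors of `V` can be divided out one at a time: `H = V • K` with `K` analytic, and `K / n!`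
extends `f_P`.
-/
open Filter Topology

namespace FormalMultilinearSeries

variable {𝕜 E F : Type*} [NontriviallyNormedField 𝕜] [NormedAddCommGroup E] [NormedSpace 𝕜 E]
  [NormedAddCommGroup F] [NormedSpace 𝕜 F]

/-- Term `t` evaluates `p (k + 1)` at `w` in the slots before `t`, `e` in slot `t` and `π w`
after it; when `w - π w = a • e`, `a` times it is the `t`-th step of the telescoping sum from
`p (k + 1) (π w, …, π w)` to `p (k + 1) (w, …, w)`. -/
noncomputable def divAlong (p : FormalMultilinearSeries 𝕜 E F) (e : E) (π : E →L[𝕜] E) :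
    FormalMultilinearSeries 𝕜 E F := fun k =>
  ∑ t : Fin (k + 1), ((p (k + 1)).curryMid t e).compContinuousLinearMap
    fun j => if j.castSucc < t then .id 𝕜 E else π

theorem smul_divAlong_apply_diag (p : FormalMultilinearSeries 𝕜 E F) (e : E) (π : E →L[𝕜] E)
    {a : 𝕜} {w : E} (hw : w - π w = a • e) (k : ℕ) :
    a • p.divAlong e π k (fun _ => w) = p (k + 1) (fun _ => w) - p (k + 1) (fun _ => π w) := by
  classical
  have key := (p (k + 1)).toMultilinearMap.map_sub_map_piecewise (fun _ => w)
    (fun _ => π w) Finset.univ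
  simp only [Finset.piecewise_univ, Finset.mem_univ, true_imp_iff, hw,
    ContinuousMultilinearMap.coe_coe] at key
  rw [key, divAlong, sum_apply, Finset.smul_sum]
  refine Finset.sum_congr rfl fun t _ => ?_
  rw [ContinuousMultilinearMap.compContinuousLinearMap_apply,
    ContinuousMultilinearMap.curryMid_apply, ← ContinuousMultilinearMap.coe_coe,
    ← (p (k + 1)).toMultilinearMap.map_insertNth_smul]
  congr 1
  ext j
  refine Fin.succAboveCases t ?_ (fun i => ?_) j
  · simp
  · simp only [Fin.insertNth_apply_succAbove, Fin.succAbove_lt_iff_castSucc_lt,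
      (Fin.succAbove_ne t i).symm, if_false]
    split_ifs <;> rfl

theorem norm_divAlong_le (p : FormalMultilinearSeries 𝕜 E F) (e : E) (π : E →L[𝕜] E) (k : ℕ) :
    ‖p.divAlong e π k‖ ≤ (k + 1) * (‖p (k + 1)‖ * ‖e‖ * max 1 ‖π‖ ^ k) := by
  have hslot (t : Fin (k + 1)) (j : Fin k) :
      ‖if j.castSucc < t then ContinuousLinearMap.id 𝕜 E else π‖ ≤ max 1 ‖π‖ := by
    split_ifs
    exacts [ContinuousLinearMap.norm_id_le.trans (le_max_left _ _), le_max_right _ _]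
  calc ‖p.divAlong e π k‖
      ≤ ∑ t : Fin (k + 1), ‖p (k + 1)‖ * ‖e‖ * ∏ _j : Fin k, max 1 ‖π‖ := by
        refine (norm_sum_le _ _).trans (Finset.sum_le_sum fun t _ => ?_)
        refine (ContinuousMultilinearMap.norm_compContinuousLinearMap_le _ _).trans ?_
        gcongr with j
        · exact ((p (k + 1)).curryMid t).le_opNorm e |>.trans_eq
            (by rw [ContinuousMultilinearMap.norm_curryMid])
        · exact hslot t j
    _ = (k + 1) * (‖p (k + 1)‖ * ‖e‖ * max 1 ‖π‖ ^ k) := by simp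

theorem radius_divAlong_pos {p : FormalMultilinearSeries 𝕜 E F} (hp : 0 < p.radius)
    (e : E) (π : E →L[𝕜] E) : 0 < (p.divAlong e π).radius := by
  obtain ⟨r, hr0, hrp⟩ := ENNReal.lt_iff_exists_nnreal_btwn.mp hp
  obtain ⟨C, -, hC⟩ := p.norm_mul_pow_le_of_lt_radius hrp
  set M := max 1 ‖π‖
  have hM : 0 < M := lt_max_of_lt_left one_pos
  have hr : (0 : ℝ) < r := by exact_mod_cast hr0
  -- halving the radius absorbs the factor `k + 1 ≤ 2 ^ k`
  obtain ⟨ρ, hρ⟩ : ∃ ρ : NNReal, (ρ : ℝ) = r / (2 * M) := ⟨⟨_, by positivity⟩, rfl⟩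
  have hρ0 : (0 : ENNReal) < ρ := by
    rw [ENNReal.coe_pos, ← NNReal.coe_pos, hρ]
    positivity
  refine hρ0.trans_le ((p.divAlong e π).le_radius_of_bound (C * ‖e‖ / r) fun k => ?_)
  have hk : (k : ℝ) + 1 ≤ 2 ^ k := by exact_mod_cast Nat.lt_two_pow_self
  calc ‖p.divAlong e π k‖ * (ρ : ℝ) ^ k
      ≤ (k + 1) * (‖p (k + 1)‖ * ‖e‖ * M ^ k) * (r / (2 * M)) ^ k := by
        rw [hρ]
        gcongr
        exact p.norm_divAlong_le e π k
    _ = ((k + 1) / 2 ^ k) * (‖p (k + 1)‖ * r ^ (k + 1)) * ‖e‖ / r := by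
        rw [div_pow, mul_pow, pow_succ]
        field_simp
    _ ≤ 1 * C * ‖e‖ / r := by
        gcongr
        · exact (div_le_one (by positivity)).mpr hk
        · exact hC (k + 1)
    _ = C * ‖e‖ / r := by ring

end FormalMultilinearSeries

section Hyperplane

variable {𝕜 E : Type*} [NontriviallyNormedField 𝕜] [NormedAddCommGroup E] [NormedSpace 𝕜 E]

theorem eventually_eq_zero_of_eventually_eq_zero_off_hyperplane {X : Type*} [TopologicalSpace X]
    [T2Space X] [Zero X] {K : E → X} {c : E} {ℓ ℓ' : E →L[𝕜] 𝕜} {v : E} (hv' : ℓ' v = 0)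
    (hv : ℓ v ≠ 0) (hK : ∀ᶠ z in 𝓝 c, ContinuousAt K z)
    (hvan : ∀ᶠ z in 𝓝 c, ℓ' (z - c) = 0 → ℓ (z - c) ≠ 0 → K z = 0) :
    ∀ᶠ z in 𝓝 c, ℓ' (z - c) = 0 → K z = 0 := by
  filter_upwards [hK, hvan.eventually_nhds] with z hKz hvz hz
  by_cases hz' : ℓ (z - c) = 0
  swap
  · exact hvz.self_of_nhds hz hz'
  -- approach `z` along a line inside `ker ℓ'` that leaves `ker ℓ` immediately
  have hline : Tendsto (fun t : 𝕜 => z + t • v) (𝓝[≠] 0) (𝓝 z) :=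
    ((continuous_const.add (continuous_id.smul continuous_const)).tendsto' 0 z
      (by simp)).mono_left nhdsWithin_le_nhds
  have hzero : ∀ᶠ t in 𝓝[≠] (0 : 𝕜), K (z + t • v) = 0 := by
    filter_upwards [hline.eventually hvz, self_mem_nhdsWithin] with t ht ht0
    exact ht (by simp [add_sub_right_comm, hz, hv'])
      (by simpa [add_sub_right_comm, hz', hv] using ht0)
  exact tendsto_nhds_unique (hKz.tendsto.comp hline)
    (tendsto_const_nhds.congr' (hzero.mono fun t ht => ht.symm))

variable {F : Type*} [NormedAddCommGroup F] [NormedSpace 𝕜 F] [CompleteSpace F]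

theorem AnalyticAt.exists_eq_linear_smul {H : E → F} {c : E} (hH : AnalyticAt 𝕜 H c)
    {ℓ : E →L[𝕜] 𝕜} (hℓ : ℓ ≠ 0) (hvan : ∀ᶠ z in 𝓝 c, ℓ (z - c) = 0 → H z = 0) :
    ∃ K : E → F, AnalyticAt 𝕜 K c ∧ ∀ᶠ z in 𝓝 c, H z = ℓ (z - c) • K z := by
  obtain ⟨e, he⟩ : ∃ e, ℓ e = 1 := by
    obtain ⟨v, hv⟩ := DFunLike.ne_iff.mp hℓ
    exact ⟨(ℓ v)⁻¹ • v, by simpa using inv_mul_cancel₀ hv⟩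
  set π : E →L[𝕜] E := .id 𝕜 E - ℓ.smulRight e
  have hπ (w : E) : w - π w = ℓ w • e := by simp [π]
  obtain ⟨p, r, hp⟩ := hH
  set q := p.divAlong e π
  have hq : 0 < q.radius := p.radius_divAlong_pos (hp.r_pos.trans_le hp.r_le) e π
  refine ⟨fun z => q.sum (z - c), ?_, ?_⟩
  · simpa using ((q.hasFPowerSeriesOnBall hq).comp_sub c).analyticAt
  have hπ0 : Tendsto π (𝓝 0) (𝓝 0) := π.continuous.tendsto' 0 0 π.map_zero
  have hπvan : ∀ᶠ w in 𝓝 0, H (c + π w) = 0 := by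
    filter_upwards [(hπ0.const_add c).eventually (by simpa using hvan)] with w hw
    exact hw (by simp [π, he])
  have hev : ∀ᶠ w in 𝓝 (0 : E), H (c + w) = ℓ w • q.sum w := by
    filter_upwards [Metric.eball_mem_nhds (0 : E) hp.r_pos,
      hπ0.eventually (Metric.eball_mem_nhds (0 : E) hp.r_pos), Metric.eball_mem_nhds (0 : E) hq,
      hπvan] with w hw hπw hqw hvw
    have hdiff := (hp.hasSum hw).sub (hvw ▸ hp.hasSum hπw)
    have hconst : p 0 (fun _ => w) - p 0 (fun _ => π w) = 0 := by
      rw [Subsingleton.elim (fun _ : Fin 0 => w) (fun _ => π w), sub_self]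
    rw [← hasSum_nat_add_iff' 1, Finset.sum_range_one, hconst, sub_zero, sub_zero] at hdiff
    have hquot := (q.hasSum hqw).const_smul (ℓ w)
    simp only [q, p.smul_divAlong_apply_diag e π (hπ w)] at hquot
    exact hdiff.unique hquot
  simpa using (tendsto_sub_nhds_zero_iff.mpr (tendsto_id (x := 𝓝 c))).eventually hev

theorem AnalyticAt.exists_eq_prod_linear_smul {ι : Type*} {H : E → F} {c : E}
    (hH : AnalyticAt 𝕜 H c) (Q : Finset ι) (ℓ : ι → E →L[𝕜] 𝕜) (hℓ : ∀ i ∈ Q, ℓ i ≠ 0)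
    (hsep : ∀ i ∈ Q, ∀ j ∈ Q, i ≠ j → ∃ v, ℓ i v = 0 ∧ ℓ j v ≠ 0)
    (hvan : ∀ i ∈ Q, ∀ᶠ z in 𝓝 c, ℓ i (z - c) = 0 → H z = 0) :
    ∃ K : E → F, AnalyticAt 𝕜 K c ∧ ∀ᶠ z in 𝓝 c, H z = (∏ i ∈ Q, ℓ i (z - c)) • K z := by
  classical
  induction Q using Finset.induction_on generalizing H with
  | empty => exact ⟨H, hH, by simp⟩
  | insert a s ha ih =>
    obtain ⟨K₁, hK₁, hHK₁⟩ :=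
      hH.exists_eq_linear_smul (hℓ a (s.mem_insert_self a)) (hvan a (s.mem_insert_self a))
    have hvan₁ : ∀ i ∈ s, ∀ᶠ z in 𝓝 c, ℓ i (z - c) = 0 → K₁ z = 0 := by
      intro i hi
      have hia : i ≠ a := fun h => ha (h ▸ hi)
      obtain ⟨v, hv, hva⟩ := hsep i (s.mem_insert_of_mem hi) a (s.mem_insert_self a) hia
      refine eventually_eq_zero_of_eventually_eq_zero_off_hyperplane hv hva
        (hK₁.eventually_analyticAt.mono fun z hz => hz.continuousAt) ?_
      filter_upwards [hvan i (s.mem_insert_of_mem hi), hHK₁] with z hHz hz hzi hza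
      exact (smul_eq_zero.mp (hz ▸ hHz hzi)).resolve_left hza
    obtain ⟨K, hK, hK₁K⟩ := ih hK₁ (fun i hi => hℓ i (s.mem_insert_of_mem hi))
      (fun i hi j hj => hsep i (s.mem_insert_of_mem hi) j (s.mem_insert_of_mem hj)) hvan₁
    refine ⟨K, hK, ?_⟩
    filter_upwards [hHK₁, hK₁K] with z h₁ h₂
    rw [h₁, h₂, Finset.prod_insert ha, mul_smul]

end Hyperplane

section Antisymmetrize

open Equiv Equiv.Perm

variable {ι α M : Type*} [Fintype ι] [DecidableEq ι] [AddCommGroup M]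

def antisymmetrize (g : (ι → α) → M) (z : ι → α) : M :=
  ∑ σ : Perm ι, sign σ • g (z ∘ σ)

theorem antisymmetrize_comp_perm (g : (ι → α) → M) (z : ι → α) (τ : Perm ι) :
    antisymmetrize g (z ∘ τ) = sign τ • antisymmetrize g z := by
  rw [antisymmetrize, antisymmetrize, Finset.smul_sum,
    ← Equiv.sum_comp (Equiv.mulLeft τ) (fun σ => sign τ • sign σ • g (z ∘ σ))]
  refine Finset.sum_congr rfl fun σ _ => ?_
  simp [Perm.sign_mul, smul_smul, ← mul_assoc, Function.comp_assoc]

theorem antisymmetrize_eq_zero_of_eq [IsAddTorsionFree M] (g : (ι → α) → M) {z : ι → α}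
    {a b : ι} (hab : a ≠ b) (hz : z a = z b) : antisymmetrize g z = 0 := by
  have h := antisymmetrize_comp_perm g z (swap a b)
  rw [sign_swap hab, comp_swap_eq_update, hz, Function.update_eq_self, ← hz,
    Function.update_eq_self] at h
  exact self_eq_neg.mp (by simpa using h)

theorem AnalyticAt.antisymmetrize {𝕜 E F : Type*} [NontriviallyNormedField 𝕜]
    [NormedAddCommGroup E] [NormedSpace 𝕜 E] [NormedAddCommGroup F] [NormedSpace 𝕜 F]
    {g : (ι → E) → F} {c : ι → E}
    (hg : ∀ σ : Perm ι, AnalyticAt 𝕜 g (c ∘ σ)) : AnalyticAt 𝕜 (antisymmetrize g) c := by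
  refine Finset.analyticAt_fun_sum _ fun σ _ => ?_
  have hpre : AnalyticAt 𝕜 (fun z : ι → E => z ∘ σ) c := analyticAt_pi_iff.mpr fun i =>
    (ContinuousLinearMap.proj (R := 𝕜) (φ := fun _ : ι => E) (σ i)).analyticAt c
  have hσ : AnalyticAt 𝕜 (fun z => g (z ∘ σ)) c := AnalyticAt.comp (g := g) (hg σ) hpre
  rcases Int.units_eq_one_or (sign σ) with h | h <;> simp only [h, one_smul, Units.neg_smul]
  exacts [hσ, hσ.neg]

end Antisymmetrize

section Pairs

open Equiv Equiv.Perm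

variable {n : ℕ}

def ltPairs (n : ℕ) : Finset (Fin n × Fin n) :=
  {p | p.1 < p.2}

@[simp]
theorem mem_ltPairs {p : Fin n × Fin n} : p ∈ ltPairs n ↔ p.1 < p.2 := by
  simp [ltPairs]

theorem prod_ltPairs {M : Type*} [CommMonoid M] (h : Fin n × Fin n → M) :
    ∏ p ∈ ltPairs n, h p = ∏ i, ∏ j ∈ Finset.Ioi i, h (i, j) := by
  rw [ltPairs, Finset.prod_filter, ← Finset.univ_product_univ, Finset.prod_product]
  refine Finset.prod_congr rfl fun i _ => ?_
  rw [← Finset.prod_filter]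
  congr 1
  ext j
  simp

theorem prod_ltPairs_sub_eq_det {R : Type*} [CommRing R] (z : Fin n → R) :
    ∏ p ∈ ltPairs n, (z p.1 - z p.2) =
      (-1) ^ (ltPairs n).card * (Matrix.vandermonde z).det := by
  rw [Matrix.det_vandermonde, ← prod_ltPairs (fun p => z p.2 - z p.1), ← Finset.prod_const,
    ← Finset.prod_mul_distrib]
  exact Finset.prod_congr rfl fun p _ => by ring

theorem prod_ltPairs_sub_comp_perm {R : Type*} [CommRing R] (z : Fin n → R)
    (σ : Perm (Fin n)) :
    ∏ p ∈ ltPairs n, (z (σ p.1) - z (σ p.2)) = sign σ • ∏ p ∈ ltPairs n, (z p.1 - z p.2) := by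
  have hperm : Matrix.vandermonde (z ∘ σ) = (Matrix.vandermonde z).submatrix σ id := rfl
  rw [show ∏ p ∈ ltPairs n, (z (σ p.1) - z (σ p.2)) = _ from prod_ltPairs_sub_eq_det (z ∘ σ),
    prod_ltPairs_sub_eq_det z, hperm, Matrix.det_permute, Units.smul_def, zsmul_eq_mul]
  ring

theorem exists_sub_eq_zero_and_sub_ne_zero {R : Type*} [Ring R] [Nontrivial R]
    {p q : Fin n × Fin n} (hp : p ∈ ltPairs n) (hq : q ∈ ltPairs n) (hpq : p ≠ q) :
    ∃ v : Fin n → R, v p.1 - v p.2 = 0 ∧ v q.1 - v q.2 ≠ 0 := by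
  rw [mem_ltPairs] at hp hq
  obtain ⟨k, hkq, hk1, hk2⟩ : ∃ k, (k = q.1 ∨ k = q.2) ∧ k ≠ p.1 ∧ k ≠ p.2 := by
    by_contra! h
    have h1 := h q.1 (Or.inl rfl)
    have h2 := h q.2 (Or.inr rfl)
    exact hpq (by ext <;> grind)
  refine ⟨Pi.single k 1, by simp [hk1.symm, hk2.symm], ?_⟩
  rcases hkq with rfl | rfl
  · simp [hq.ne']
  · simp [hq.ne]

theorem prod_sub_ne_zero_of_injective {R : Type*} [CommRing R] [IsDomain R] {Q : Finset (Fin n × Fin n)}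
    (hQ : Q ⊆ ltPairs n) {z : Fin n → R} (hz : Function.Injective z) :
    ∏ p ∈ Q, (z p.1 - z p.2) ≠ 0 :=
  Finset.prod_ne_zero_iff.mpr fun _ hp => sub_ne_zero.mpr (hz.ne (mem_ltPairs.mp (hQ hp)).ne)

theorem prod_ltPairs_mul_sum_div_eq_antisymmetrize {K : Type*} [Field K] (f : (Fin n → K) → K)
    {P : Finset (Fin n × Fin n)} (hP : P ⊆ ltPairs n) {z : Fin n → K}
    (hz : Function.Injective z) :
    (∏ p ∈ ltPairs n, (z p.1 - z p.2)) *
        ∑ σ : Perm (Fin n), f (z ∘ σ) / ∏ p ∈ P, (z (σ p.1) - z (σ p.2)) =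
      antisymmetrize (fun y => f y * ∏ p ∈ ltPairs n \ P, (y p.1 - y p.2)) z := by
  rw [Finset.mul_sum, antisymmetrize]
  refine Finset.sum_congr rfl fun σ _ => ?_
  have hD := prod_sub_ne_zero_of_injective hP (hz.comp σ.injective)
  have hV : ∏ p ∈ ltPairs n, (z p.1 - z p.2) =
      sign σ • ((∏ p ∈ ltPairs n \ P, (z (σ p.1) - z (σ p.2))) *
        ∏ p ∈ P, (z (σ p.1) - z (σ p.2))) := by
    rw [Finset.prod_sdiff hP, prod_ltPairs_sub_comp_perm, smul_smul, Int.units_mul_self, one_smul]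
  simp only [Function.comp_apply] at hD ⊢
  rw [hV, Units.smul_def, Units.smul_def, zsmul_eq_mul, zsmul_eq_mul]
  field_simp

theorem AnalyticAt.exists_eq_prod_ltPairs_smul {𝕜 F : Type*} [NontriviallyNormedField 𝕜]
    [NormedAddCommGroup F] [NormedSpace 𝕜 F] [CompleteSpace F] {H : (Fin n → 𝕜) → F} {x : 𝕜}
    (hH : AnalyticAt 𝕜 H fun _ => x) (hvan : ∀ a b : Fin n, a ≠ b → ∀ z, z a = z b → H z = 0) :
    ∃ K : (Fin n → 𝕜) → F, AnalyticAt 𝕜 K (fun _ => x) ∧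
      ∀ᶠ z in 𝓝 fun _ => x, H z = (∏ p ∈ ltPairs n, (z p.1 - z p.2)) • K z := by
  set ℓ : Fin n × Fin n → (Fin n → 𝕜) →L[𝕜] 𝕜 := fun p => .proj p.1 - .proj p.2
  have hℓ (p : Fin n × Fin n) (v : Fin n → 𝕜) : ℓ p v = v p.1 - v p.2 := rfl
  have hℓx (p : Fin n × Fin n) (z : Fin n → 𝕜) : ℓ p (z - fun _ => x) = z p.1 - z p.2 := by
    simp [hℓ]
  obtain ⟨K, hK, hHK⟩ := hH.exists_eq_prod_linear_smul (ltPairs n) ℓ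
    (fun p hp => DFunLike.ne_iff.mpr ⟨Pi.single p.1 1, by simp [hℓ, (mem_ltPairs.mp hp).ne']⟩)
    (fun p hp q hq hpq => by
      simpa only [hℓ] using exists_sub_eq_zero_and_sub_ne_zero hp hq hpq)
    (fun p hp => .of_forall fun z hz =>
      hvan _ _ (mem_ltPairs.mp hp).ne z (sub_eq_zero.mp (hℓx p z ▸ hz)))
  exact ⟨K, hK, by simpa only [hℓx] using hHK⟩

end Pairs

/-- The symmetrization `f_P = (1/n!) ∑_{σ} f(z_{σ(1)},…,z_{σ(n)})/∏_{(a,b)∈P}(z_{σ(a)}-z_{σ(b)})`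
of an analytic function `f` near `(1,…,1)` extends to an analytic function near `(1,…,1)`. -/
theorem stmt_5 (n : ℕ) (f : (Fin n → ℂ) → ℂ)
    (hf : AnalyticAt ℂ f (fun _ => 1))
    (P : Finset (Fin n × Fin n)) (hP : ∀ p ∈ P, p.1 < p.2) :
    ∃ g : (Fin n → ℂ) → ℂ, AnalyticAt ℂ g (fun _ => 1) ∧
      ∀ᶠ z : Fin n → ℂ in nhds (fun _ => 1), Function.Injective z →
        g z = ((n.factorial : ℂ))⁻¹ *
          ∑ σ : Equiv.Perm (Fin n),
            f (z ∘ σ) / ∏ p ∈ P, (z (σ p.1) - z (σ p.2)) := by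
  have hPn : P ⊆ ltPairs n := fun p hp => mem_ltPairs.mpr (hP p hp)
  set g : (Fin n → ℂ) → ℂ := fun y => f y * ∏ p ∈ ltPairs n \ P, (y p.1 - y p.2)
  have hg : AnalyticAt ℂ (antisymmetrize g) fun _ => 1 :=
    AnalyticAt.antisymmetrize fun σ => hf.mul <| Finset.analyticAt_fun_prod _ fun p _ =>
      (ContinuousLinearMap.proj (R := ℂ) (φ := fun _ : Fin n => ℂ) p.1 - .proj p.2).analyticAt _
  obtain ⟨K, hK, hgK⟩ := hg.exists_eq_prod_ltPairs_smul
    fun a b hab z hz => antisymmetrize_eq_zero_of_eq g hab hz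
  refine ⟨fun z => (n.factorial : ℂ)⁻¹ * K z, analyticAt_const.mul hK, ?_⟩
  filter_upwards [hgK] with z hz hinj
  rw [← prod_ltPairs_mul_sum_div_eq_antisymmetrize f hPn hinj, smul_eq_mul] at hz
  rw [mul_left_cancel₀ (prod_sub_ne_zero_of_injective subset_rfl hinj) hz]
end

section
/- For a compactly supported probability measure m on ℝ with moments M_k(m), and H_m(u) = ∫_0^{ln u} R_m(t) dt + ln(ln(u)/(u-1)) (as a power series in u-1), one has for every k ≥ 1: M_k(m) = ∑_{ℓ=0}^{k} (k! / (ℓ! (ℓ+1)! (k-ℓ)!)) · (∂^ℓ/∂u^ℓ)[u^k (H_m'(u))^{k-ℓ}] evaluated at u = 1. -/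
/-!
Write `Sinv x = x f(x)` and `eˣ - 1 = x e(x)`, with `f = dslope Sinv 0` and `e = dslope exp 0`.
Lagrange inversion gives `(k + 1) M_k = [xᵏ] f(x)^-(k+1)`. Unwinding the definitions of `Rt` and
`H`, `e(x) / f(x) = eˣ (H'(eˣ)(eˣ - 1) + 1)`, so `f(x)^-(k+1) = P(eˣ) eˣ e(x)^-(k+1)` with
`P(u) = uᵏ (H'(u)(u - 1) + 1)^(k+1)`, and the change of variables `u = eˣ` in the residue turns the
`xᵏ`-coefficient of this into the `(u - 1)ᵏ`-coefficient of `P`; expanding the binomial gives the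
formula. Lagrange inversion is itself that change of variables, applied to `u = Sinv x` and `S'`,
and both rest on the vanishing of the residue of an exact derivative.
-/

open Filter MeasureTheory Topology

section TaylorCoeff

variable {𝕜 : Type*} [NontriviallyNormedField 𝕜]

noncomputable def taylorCoeff (f : 𝕜 → 𝕜) (c : 𝕜) (n : ℕ) : 𝕜 :=
  iteratedDeriv n f c / n.factorial

variable {f g : 𝕜 → 𝕜} {c : 𝕜}

theorem taylorCoeff_congr (h : f =ᶠ[𝓝 c] g) (n : ℕ) :
    taylorCoeff f c n = taylorCoeff g c n := by
  rw [taylorCoeff, taylorCoeff, h.iteratedDeriv_eq]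

@[simp]
theorem taylorCoeff_zero (f : 𝕜 → 𝕜) (c : 𝕜) : taylorCoeff f c 0 = f c := by
  simp [taylorCoeff]

theorem taylorCoeff_const_mul (a : 𝕜) (f : 𝕜 → 𝕜) (c : 𝕜) (n : ℕ) :
    taylorCoeff (fun x => a * f x) c n = a * taylorCoeff f c n := by
  rw [taylorCoeff, taylorCoeff, iteratedDeriv_const_mul_field, mul_div_assoc]

theorem AnalyticAt.dslope (hf : AnalyticAt 𝕜 f c) : AnalyticAt 𝕜 (dslope f c) c :=
  let ⟨_, hp⟩ := hf
  hp.has_fpower_series_dslope_fslope.analyticAt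

theorem dslope_sub_mul (hg : DifferentiableAt 𝕜 g c) :
    dslope (fun x => (x - c) * g x) c = g := by
  ext x
  rcases eq_or_ne x c with rfl | hx
  · rw [dslope_same]
    simpa using (((hasDerivAt_id x).sub_const x).fun_mul hg.hasDerivAt).deriv
  · rw [dslope_of_ne _ hx, slope_def_field]
    field_simp [sub_ne_zero.mpr hx]
    ring

variable [CharZero 𝕜]

theorem taylorCoeff_deriv (f : 𝕜 → 𝕜) (c : 𝕜) (n : ℕ) :
    taylorCoeff (deriv f) c n = (n + 1) * taylorCoeff f c (n + 1) := by
  rw [taylorCoeff, taylorCoeff, ← iteratedDeriv_succ', Nat.factorial_succ]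
  push_cast
  field_simp

theorem factorial_div_mul_iteratedDeriv_eq (F : 𝕜 → 𝕜) (c : 𝕜) {k ℓ : ℕ} (h : ℓ ≤ k) :
    (k.factorial : 𝕜) / (ℓ.factorial * (ℓ + 1).factorial * (k - ℓ).factorial) *
        iteratedDeriv ℓ F c =
      ((k + 1).choose (ℓ + 1) : 𝕜) / (k + 1) * taylorCoeff F c ℓ := by
  have hchoose := Nat.choose_mul_factorial_mul_factorial (Nat.succ_le_succ h)
  rw [Nat.succ_sub_succ, Nat.factorial_succ] at hchoose
  have hchoose' : ((k + 1).choose (ℓ + 1) : 𝕜) * (ℓ + 1).factorial * (k - ℓ).factorial =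
      (k + 1) * k.factorial := by exact_mod_cast hchoose
  have hfac (n : ℕ) : (n.factorial : 𝕜) ≠ 0 := Nat.cast_ne_zero.mpr n.factorial_ne_zero
  have hk : (k : 𝕜) + 1 ≠ 0 := Nat.cast_add_one_ne_zero k
  have hC : ((k + 1).choose (ℓ + 1) : 𝕜) =
      (k + 1) * k.factorial / ((ℓ + 1).factorial * (k - ℓ).factorial) := by
    rw [eq_div_iff (mul_ne_zero (hfac _) (hfac _)), ← mul_assoc, hchoose']
  rw [taylorCoeff, hC]
  field_simp

variable [CompleteSpace 𝕜]

theorem HasFPowerSeriesAt.taylorCoeff_eq {p : FormalMultilinearSeries 𝕜 𝕜 𝕜}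
    (h : HasFPowerSeriesAt f p c) (n : ℕ) : taylorCoeff f c n = p.coeff n := by
  rw [h.eq_formalMultilinearSeries h.analyticAt.hasFPowerSeriesAt,
    FormalMultilinearSeries.coeff_ofScalars, taylorCoeff]

theorem taylorCoeff_add (hf : AnalyticAt 𝕜 f c) (hg : AnalyticAt 𝕜 g c) (n : ℕ) :
    taylorCoeff (fun x => f x + g x) c n = taylorCoeff f c n + taylorCoeff g c n := by
  obtain ⟨p, hp⟩ := hf
  obtain ⟨q, hq⟩ := hg
  change taylorCoeff (f + g) c n = _
  rw [(hp.add hq).taylorCoeff_eq, hp.taylorCoeff_eq, hq.taylorCoeff_eq]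
  rfl

theorem taylorCoeff_sum {ι : Type*} (s : Finset ι) {F : ι → 𝕜 → 𝕜}
    (hF : ∀ i ∈ s, AnalyticAt 𝕜 (F i) c) (n : ℕ) :
    taylorCoeff (fun x => ∑ i ∈ s, F i x) c n = ∑ i ∈ s, taylorCoeff (F i) c n := by
  classical
  induction s using Finset.induction_on with
  | empty => simpa using taylorCoeff_const_mul 0 (fun _ => 0) c n
  | insert i s hi ih =>
    have hs : ∀ j ∈ s, AnalyticAt 𝕜 (F j) c := fun j hj => hF j (by simp [hj])
    simp only [Finset.sum_insert hi]
    rw [taylorCoeff_add (hF i (by simp)) (Finset.analyticAt_fun_sum _ hs), ih hs]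

theorem taylorCoeff_dslope (hf : AnalyticAt 𝕜 f c) (n : ℕ) :
    taylorCoeff (dslope f c) c n = taylorCoeff f c (n + 1) := by
  obtain ⟨p, hp⟩ := hf
  rw [hp.has_fpower_series_dslope_fslope.taylorCoeff_eq, hp.taylorCoeff_eq,
    FormalMultilinearSeries.coeff_fslope]

theorem taylorCoeff_sub_mul_succ (hg : AnalyticAt 𝕜 g c) (n : ℕ) :
    taylorCoeff (fun x => (x - c) * g x) c (n + 1) = taylorCoeff g c n := by
  rw [← taylorCoeff_dslope (by fun_prop : AnalyticAt 𝕜 (fun x => (x - c) * g x) c),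
    dslope_sub_mul hg.differentiableAt]

theorem taylorCoeff_sub_pow_mul (hg : AnalyticAt 𝕜 g c) (j n : ℕ) :
    taylorCoeff (fun x => (x - c) ^ j * g x) c n =
      if j ≤ n then taylorCoeff g c (n - j) else 0 := by
  induction j generalizing n with
  | zero => simp
  | succ j ih =>
    cases n with
    | zero => simp
    | succ n =>
      have h := taylorCoeff_sub_mul_succ
        (by fun_prop : AnalyticAt 𝕜 (fun x => (x - c) ^ j * g x) c) n
      simp only [pow_succ', mul_assoc] at h ⊢
      rw [h, ih]
      simp [Nat.succ_sub_succ]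

theorem taylorCoeff_deriv_mul_mul_inv_pow_eq_zero {B : 𝕜 → 𝕜} (hB : AnalyticAt 𝕜 B 0)
    (hB0 : B 0 ≠ 0) (s : ℕ) :
    taylorCoeff (fun x => deriv (fun y => y * B y) x * (B x)⁻¹ ^ (s + 2)) 0 (s + 1) = 0 := by
  set C : 𝕜 → 𝕜 := fun x => (B x)⁻¹ ^ (s + 1) with hC
  have hCA : AnalyticAt 𝕜 C 0 := (hB.inv hB0).pow _
  have hs : (s + 1 : 𝕜) ≠ 0 := by exact_mod_cast s.succ_ne_zero
  -- `(x B)' (x B)⁻¹ ^ (s + 2)` is the derivative of `-(x B)⁻¹ ^ (s + 1) / (s + 1)`, so it has no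
  -- residue; multiplied by `x ^ (s + 2)` this is the decomposition below.
  have hdecomp : (fun x => deriv (fun y => y * B y) x * (B x)⁻¹ ^ (s + 2)) =ᶠ[𝓝 0]
      fun x => C x + -(s + 1 : 𝕜)⁻¹ * ((x - 0) * deriv C x) := by
    filter_upwards [hB.eventually_analyticAt, hB.continuousAt.eventually_ne hB0] with x hx hx0
    have hBx := hx.differentiableAt.hasDerivAt
    have hCx : HasDerivAt C _ x := (hBx.inv hx0).fun_pow (s + 1)
    rw [((hasDerivAt_id' x).fun_mul hBx).deriv, hCx.deriv, hC]
    simp only [Pi.inv_apply, Nat.add_sub_cancel, inv_pow, Nat.cast_succ]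
    field_simp
    ring
  rw [taylorCoeff_congr hdecomp, taylorCoeff_add hCA (by fun_prop), taylorCoeff_const_mul,
    taylorCoeff_sub_mul_succ hCA.deriv, taylorCoeff_deriv]
  field_simp
  ring

/-- Change of variables `u = φ x` in a residue, written with `dslope φ 0 x = (φ x - φ 0) / x`. -/
theorem taylorCoeff_comp_mul_deriv_mul_inv_dslope_pow {φ Q : 𝕜 → 𝕜} (hφ : AnalyticAt 𝕜 φ 0)
    (hφ' : deriv φ 0 ≠ 0) (hQ : AnalyticAt 𝕜 Q (φ 0)) (t : ℕ) :
    taylorCoeff (fun x => Q (φ x) * deriv φ x * (dslope φ 0 x)⁻¹ ^ (t + 1)) 0 t =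
      taylorCoeff Q (φ 0) t := by
  have hφe : ∀ x, φ x - φ 0 = x * dslope φ 0 x := fun x => by
    simpa using (sub_smul_dslope φ 0 x).symm
  have hφ'e : deriv φ = deriv (fun x => x * dslope φ 0 x) := by
    have h : φ = fun y => φ 0 + y * dslope φ 0 y := funext fun y => by linear_combination hφe y
    ext x
    conv_lhs => rw [h]
    exact deriv_const_add _
  have heA : AnalyticAt 𝕜 (dslope φ 0) 0 := hφ.dslope
  have he0 : dslope φ 0 0 ≠ 0 := by rwa [dslope_same]
  induction t generalizing Q with
  | zero =>
    simp only [taylorCoeff_zero, zero_add, pow_one, dslope_same]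
    field_simp
  | succ t ih =>
    have hQ₁ : AnalyticAt 𝕜 (dslope Q (φ 0)) (φ 0) := hQ.dslope
    have hdecomp : (fun x => Q (φ x) * deriv φ x * (dslope φ 0 x)⁻¹ ^ (t + 2)) =ᶠ[𝓝 0]
        fun x => Q (φ 0) * (deriv (fun y => y * dslope φ 0 y) x * (dslope φ 0 x)⁻¹ ^ (t + 2)) +
          (x - 0) * (dslope Q (φ 0) (φ x) * deriv φ x * (dslope φ 0 x)⁻¹ ^ (t + 1)) := by
      filter_upwards [heA.continuousAt.eventually_ne he0] with x hx
      have hQφ : Q (φ x) - Q (φ 0) = (φ x - φ 0) * dslope Q (φ 0) (φ x) := by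
        simpa using (sub_smul_dslope Q (φ 0) (φ x)).symm
      rw [eq_add_of_sub_eq hQφ, hφe, hφ'e]
      simp only [inv_pow]
      field_simp
      ring
    have hQ₁φ : AnalyticAt 𝕜 (fun x => dslope Q (φ 0) (φ x)) 0 := hQ₁.comp hφ
    rw [taylorCoeff_congr hdecomp, taylorCoeff_add (by fun_prop) (by fun_prop),
      taylorCoeff_const_mul, taylorCoeff_deriv_mul_mul_inv_pow_eq_zero heA he0,
      taylorCoeff_sub_mul_succ (by fun_prop), ih hQ₁, taylorCoeff_dslope hQ, mul_zero, zero_add]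

theorem lagrange_inversion {S φ : 𝕜 → 𝕜} (hS : AnalyticAt 𝕜 S 0) (hφ : AnalyticAt 𝕜 φ 0)
    (hφ0 : φ 0 = 0) (hSφ : ∀ᶠ x in 𝓝 0, S (φ x) = x) (k : ℕ) :
    (k + 1) * taylorCoeff S 0 (k + 1) = taylorCoeff (fun x => (dslope φ 0 x)⁻¹ ^ (k + 1)) 0 k := by
  rw [← hφ0] at hS
  have hchain : ∀ᶠ x in 𝓝 0, deriv S (φ x) * deriv φ x = 1 := by
    filter_upwards [hSφ.eventually_nhds, hφ.eventually_analyticAt,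
      hφ.continuousAt.eventually hS.eventually_analyticAt] with x hx hφx hSx
    rw [← (hSx.differentiableAt.hasDerivAt.comp x hφx.differentiableAt.hasDerivAt).deriv]
    exact (show S ∘ φ =ᶠ[𝓝 x] (id : 𝕜 → 𝕜) from hx).deriv_eq.trans (deriv_id x)
  have hφ' : deriv φ 0 ≠ 0 := right_ne_zero_of_mul_eq_one hchain.self_of_nhds
  have key := taylorCoeff_comp_mul_deriv_mul_inv_dslope_pow hφ hφ' hS.deriv k
  rw [hφ0] at key
  rw [← taylorCoeff_deriv, ← key]
  refine taylorCoeff_congr ?_ k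
  filter_upwards [hchain] with x hx
  rw [hx, one_mul]

theorem taylorCoeff_mul_mul_sub_add_one_pow (hf : AnalyticAt 𝕜 f c) (hg : AnalyticAt 𝕜 g c)
    (n : ℕ) :
    taylorCoeff (fun u => f u * (g u * (u - c) + 1) ^ (n + 1)) c n =
      ∑ ℓ ∈ Finset.range (n + 1),
        ((n + 1).choose (ℓ + 1) : 𝕜) * taylorCoeff (fun u => f u * g u ^ (n - ℓ)) c ℓ := by
  have hexpand : (fun u => f u * (g u * (u - c) + 1) ^ (n + 1)) = fun u =>
      ∑ m ∈ Finset.range (n + 2), ((n + 1).choose m : 𝕜) * ((u - c) ^ m * (f u * g u ^ m)) := by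
    ext u
    rw [add_pow, Finset.mul_sum]
    refine Finset.sum_congr rfl fun m _ => ?_
    rw [one_pow, mul_one, mul_pow]
    ring
  have hterm (m : ℕ) : taylorCoeff (fun u => (u - c) ^ m * (f u * g u ^ m)) c n =
      if m ≤ n then taylorCoeff (fun u => f u * g u ^ m) c (n - m) else 0 :=
    taylorCoeff_sub_pow_mul (by fun_prop) m n
  rw [hexpand, taylorCoeff_sum _ fun m _ => by fun_prop]
  simp only [taylorCoeff_const_mul, hterm]
  rw [Finset.sum_range_succ, if_neg (by omega), mul_zero, add_zero, ← Finset.sum_range_reflect]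
  refine Finset.sum_congr rfl fun ℓ hℓ => ?_
  have hℓn : ℓ ≤ n := Nat.lt_succ_iff.mp (Finset.mem_range.mp hℓ)
  rw [if_pos (by omega), Nat.choose_symm_of_eq_add (by omega : n + 1 = n + 1 - 1 - ℓ + (ℓ + 1)),
    show n - (n + 1 - 1 - ℓ) = ℓ by omega, show n + 1 - 1 - ℓ = n - ℓ by omega]

end TaylorCoeff

namespace FormalMultilinearSeries

variable {𝕜 : Type*} [NontriviallyNormedField 𝕜]

theorem mul_ofScalarsSum_eq_tsum (a : ℕ → 𝕜) (w : 𝕜) :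
    w * ofScalarsSum a w = ∑' n, a n * w ^ (n + 1) := by
  rw [ofScalars_sum_eq, ← tsum_mul_left]
  congr 1
  ext n
  rw [smul_eq_mul]
  ring

theorem hasFPowerSeriesAt_ofScalarsSum_of_norm_le_pow [CompleteSpace 𝕜] {a : ℕ → 𝕜} {K : ℝ}
    (h : ∀ n, ‖a n‖ ≤ K ^ n) :
    HasFPowerSeriesAt (ofScalarsSum a) (ofScalars 𝕜 a) 0 := by
  set r : NNReal := ⟨(|K| + 1)⁻¹, by positivity⟩
  have hr : (r : ENNReal) ≤ (ofScalars 𝕜 a).radius := by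
    refine (ofScalars 𝕜 a).le_radius_of_bound 1 fun n => ?_
    change ‖ofScalars 𝕜 a n‖ * ((|K| + 1)⁻¹) ^ n ≤ 1
    rw [ofScalars_norm, inv_pow, mul_inv_le_iff₀ (by positivity), one_mul]
    calc ‖a n‖ ≤ K ^ n := h n
      _ ≤ |K| ^ n := (le_abs_self _).trans (abs_pow K n).le
      _ ≤ (|K| + 1) ^ n := pow_le_pow_left₀ (abs_nonneg K) (by linarith) n
  have hr0 : (0 : ENNReal) < r :=
    ENNReal.coe_pos.mpr (NNReal.coe_pos.mp (inv_pos.mpr (by positivity)))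
  exact ((ofScalars 𝕜 a).hasFPowerSeriesOnBall (hr0.trans_le hr)).hasFPowerSeriesAt

end FormalMultilinearSeries

theorem abs_integral_pow_le_of_ae_abs_le {μ : Measure ℝ} [IsProbabilityMeasure μ] {C : ℝ}
    (hC : ∀ᵐ x ∂μ, |x| ≤ C) (n : ℕ) : |∫ x, x ^ n ∂μ| ≤ C ^ n := by
  have h := norm_integral_le_of_norm_le_const (μ := μ) (f := fun x => x ^ n) (C := C ^ n) <| by
    filter_upwards [hC] with x hx
    rw [Real.norm_eq_abs, abs_pow]
    exact pow_le_pow_left₀ (abs_nonneg x) hx n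
  rwa [probReal_univ, mul_one, Real.norm_eq_abs] at h

theorem dslope_exp_eventuallyEq_dslope_mul {Sinv Rt H : ℝ → ℝ} (hSinvA : AnalyticAt ℝ Sinv 0)
    (hSinv0 : Sinv 0 = 0) (hSinv_ne : ∀ᶠ z in 𝓝[≠] 0, Sinv z ≠ 0) (hHA : AnalyticAt ℝ H 1)
    (hRt : ∀ᶠ z in 𝓝[≠] 0, Rt z = (Sinv z)⁻¹ - z⁻¹)
    (hH' : ∀ᶠ u in 𝓝[≠] 1,
      deriv H u = Rt (Real.log u) / u + 1 / (u * Real.log u) - 1 / (u - 1)) :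
    dslope Real.exp 0 =ᶠ[𝓝 0] fun x =>
      dslope Sinv 0 x * (Real.exp x * (deriv H (Real.exp x) * (Real.exp x - 1) + 1)) := by
  have hexp : Tendsto Real.exp (𝓝[≠] 0) (𝓝[≠] 1) := by
    refine tendsto_nhdsWithin_iff.mpr ⟨?_, ?_⟩
    · simpa using Real.continuous_exp.continuousAt.tendsto.mono_left (nhdsWithin_le_nhds (a := 0))
    · filter_upwards [self_mem_nhdsWithin] with x hx
      simpa using hx
  have hHA' : AnalyticAt ℝ (deriv H) (Real.exp 0) := by simpa using hHA.deriv
  refine (analyticAt_rexp.dslope.frequently_eq_iff_eventually_eq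
    (hSinvA.dslope.mul (by fun_prop))).mp (Eventually.frequently ?_)
  filter_upwards [hRt, hexp.eventually hH', hSinv_ne, self_mem_nhdsWithin] with x hRtx hH'x hSx hx
  have hx0 : x ≠ 0 := hx
  have hex : Real.exp x - 1 ≠ 0 := sub_ne_zero.mpr (by simpa using hx0)
  rw [Real.log_exp, hRtx] at hH'x
  rw [Pi.mul_apply, dslope_of_ne _ hx0, dslope_of_ne _ hx0, slope_def_field, slope_def_field,
    hH'x, hSinv0, Real.exp_zero]
  field_simp
  ring

theorem inv_dslope_pow_eventuallyEq {Sinv Rt H : ℝ → ℝ} (hSinvA : AnalyticAt ℝ Sinv 0)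
    (hSinv0 : Sinv 0 = 0) (hSinv_ne : ∀ᶠ z in 𝓝[≠] 0, Sinv z ≠ 0) (hHA : AnalyticAt ℝ H 1)
    (hRt : ∀ᶠ z in 𝓝[≠] 0, Rt z = (Sinv z)⁻¹ - z⁻¹)
    (hH' : ∀ᶠ u in 𝓝[≠] 1,
      deriv H u = Rt (Real.log u) / u + 1 / (u * Real.log u) - 1 / (u - 1)) (k : ℕ) :
    (fun x => (dslope Sinv 0 x)⁻¹ ^ (k + 1)) =ᶠ[𝓝 0] fun x =>
      Real.exp x ^ k * (deriv H (Real.exp x) * (Real.exp x - 1) + 1) ^ (k + 1) *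
        deriv Real.exp x * (dslope Real.exp 0 x)⁻¹ ^ (k + 1) := by
  filter_upwards [dslope_exp_eventuallyEq_dslope_mul hSinvA hSinv0 hSinv_ne hHA hRt hH',
    analyticAt_rexp.dslope.continuousAt.eventually_ne (by simp : dslope Real.exp 0 0 ≠ 0)]
    with x hfW he
  rw [hfW] at he ⊢
  generalize deriv H (Real.exp x) * (Real.exp x - 1) + 1 = B at he ⊢
  obtain ⟨hf, hexp, hB⟩ : _ ∧ _ ∧ _ := by simpa only [mul_ne_zero_iff] using he
  simp only [Real.deriv_exp, mul_inv, mul_pow, inv_pow]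
  field_simp
  ring

theorem stmt_9_general (μ : Measure ℝ) [IsProbabilityMeasure μ]
    (C : ℝ) (hsupp : ∀ᵐ x ∂μ, |x| ≤ C)
    (M : ℕ → ℝ) (hM : ∀ k, M k = ∫ x, x ^ k ∂μ)
    (Sinv : ℝ → ℝ) (hSinvA : AnalyticAt ℝ Sinv 0) (hSinv0 : Sinv 0 = 0)
    (hScomp : ∀ᶠ z in nhds (0 : ℝ), ∑' k : ℕ, M k * Sinv z ^ (k + 1) = z)
    (Rt : ℝ → ℝ)
    (hRt : ∀ᶠ z in nhdsWithin (0 : ℝ) {0}ᶜ, Rt z = (Sinv z)⁻¹ - z⁻¹)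
    (H : ℝ → ℝ) (hHA : AnalyticAt ℝ H 1)
    (hH' : ∀ᶠ u in nhdsWithin (1 : ℝ) {1}ᶜ,
      deriv H u = Rt (Real.log u) / u + 1 / (u * Real.log u) - 1 / (u - 1)) :
    ∀ k : ℕ, 1 ≤ k →
      M k = ∑ ℓ ∈ Finset.range (k + 1),
        ((k.factorial : ℝ) / (ℓ.factorial * (ℓ + 1).factorial * (k - ℓ).factorial)) *
          iteratedDeriv ℓ (fun u : ℝ => u ^ k * (deriv H u) ^ (k - ℓ)) 1 := by
  intro k _
  set T := FormalMultilinearSeries.ofScalarsSum (E := ℝ) M with hT_def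
  have hT : HasFPowerSeriesAt T (FormalMultilinearSeries.ofScalars ℝ M) 0 :=
    FormalMultilinearSeries.hasFPowerSeriesAt_ofScalarsSum_of_norm_le_pow (K := C) fun n => by
      rw [Real.norm_eq_abs, hM]
      exact abs_integral_pow_le_of_ae_abs_le hsupp n
  have hinv : ∀ᶠ x in 𝓝 0, Sinv x * T (Sinv x) = x := by
    filter_upwards [hScomp] with x hx
    rwa [hT_def, FormalMultilinearSeries.mul_ofScalarsSum_eq_tsum]
  have hSinv_ne : ∀ᶠ z in 𝓝[≠] 0, Sinv z ≠ 0 := by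
    filter_upwards [hinv.filter_mono nhdsWithin_le_nhds, self_mem_nhdsWithin] with z hz hz0 h
    rw [h, zero_mul] at hz
    exact hz0 hz.symm
  have hM_coeff : M k = taylorCoeff (fun w => w * T w) 0 (k + 1) := by
    simpa [hT.taylorCoeff_eq] using (taylorCoeff_sub_mul_succ hT.analyticAt k).symm
  have hsubst := taylorCoeff_comp_mul_deriv_mul_inv_dslope_pow analyticAt_rexp (by simp)
    (Q := fun u => u ^ k * (deriv H u * (u - 1) + 1) ^ (k + 1)) (by rw [Real.exp_zero]; fun_prop) k
  rw [Real.exp_zero] at hsubst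
  have hcoeff : ((k : ℝ) + 1) * M k = ∑ ℓ ∈ Finset.range (k + 1),
      ((k + 1).choose (ℓ + 1) : ℝ) * taylorCoeff (fun u => u ^ k * deriv H u ^ (k - ℓ)) 1 ℓ := by
    rw [hM_coeff, lagrange_inversion (S := fun w => w * T w) (analyticAt_id.mul hT.analyticAt)
      hSinvA hSinv0 hinv k, taylorCoeff_congr (inv_dslope_pow_eventuallyEq hSinvA hSinv0 hSinv_ne
      hHA hRt hH' k), hsubst, taylorCoeff_mul_mul_sub_add_one_pow (by fun_prop) hHA.deriv]
  rw [Finset.sum_congr rfl fun ℓ hℓ =>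
    factorial_div_mul_iteratedDeriv_eq _ _ (Nat.lt_succ_iff.mp (Finset.mem_range.mp hℓ))]
  simp_rw [div_mul_eq_mul_div, ← Finset.sum_div, ← hcoeff]
  field_simp

/-- Lemma 6.1: for a compactly supported probability measure `μ` on `ℝ` with moments `M k`,
moment generating series `S(w) = ∑_k M_k w^{k+1}` with local inverse `Sinv`, `R`-transform
`Rt(z) = 1/Sinv(z) - 1/z`, and `H(u) = ∫_0^{ln u} Rt + ln(ln u/(u-1))` (characterized by
`H(1) = 0` and `H'(u) = Rt(ln u)/u + 1/(u ln u) - 1/(u-1)`), one has for every `k ≥ 1`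
`M_k = ∑_{ℓ=0}^{k} k!/(ℓ!(ℓ+1)!(k-ℓ)!) ∂^ℓ/∂u^ℓ [u^k H'(u)^{k-ℓ}] |_{u=1}`. -/
theorem stmt_9 (μ : Measure ℝ) [IsProbabilityMeasure μ]
    (C : ℝ) (hsupp : ∀ᵐ x ∂μ, |x| ≤ C)
    (M : ℕ → ℝ) (hM : ∀ k, M k = ∫ x, x ^ k ∂μ)
    (Sinv : ℝ → ℝ) (hSinvA : AnalyticAt ℝ Sinv 0) (hSinv0 : Sinv 0 = 0)
    (hScomp : ∀ᶠ z in nhds (0 : ℝ), ∑' k : ℕ, M k * Sinv z ^ (k + 1) = z)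
    (Rt : ℝ → ℝ) (hRtA : AnalyticAt ℝ Rt 0)
    (hRt : ∀ᶠ z in nhdsWithin (0 : ℝ) {0}ᶜ, Rt z = (Sinv z)⁻¹ - z⁻¹)
    (H : ℝ → ℝ) (hHA : AnalyticAt ℝ H 1) (hH1 : H 1 = 0)
    (hH' : ∀ᶠ u in nhdsWithin (1 : ℝ) {1}ᶜ,
      deriv H u = Rt (Real.log u) / u + 1 / (u * Real.log u) - 1 / (u - 1)) :
    ∀ k : ℕ, 1 ≤ k →
      M k = ∑ ℓ ∈ Finset.range (k + 1),
        ((k.factorial : ℝ) / (ℓ.factorial * (ℓ + 1).factorial * (k - ℓ).factorial)) *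
          iteratedDeriv ℓ (fun u : ℝ => u ^ k * (deriv H u) ^ (k - ℓ)) 1 :=
  stmt_9_general μ C hsupp M hM Sinv hSinvA hSinv0 hScomp Rt hRt H hHA hH'
end
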